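/- Let n = 1 and define w by w(x) = |x|^{-1/2} for x < 1/2 and w(x) = |x - k|^{-1/2} for x ∈ [k - 1/2, k + 1/2), k ≥ 1. Then sup over bounded intervals J of (1/|J|)∫_J w(-x) dx · (1/|J|)∫_J w(x)^{-1} dx = ∞; in particular w ∉ A_{-I,2}, even though w ∈ A_2. -/

import Mathlib

open MeasureTheory

/-- The weight `w(x) = |x|^{-1/2}` for `x < 1/2` and `w(x) = |x-k|^{-1/2}` for
`x ∈ [k - 1/2, k + 1/2)`, `k ≥ 1` (the nearest integer to such `x` is `k = round x`). -/
noncomputable def w (x : ℝ) : ℝ :=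
  if x < 1 / 2 then |x| ^ (-(1 : ℝ) / 2) else |x - (round x : ℤ)| ^ (-(1 : ℝ) / 2)

lemma round_eq_of_mem {k : ℕ} {y : ℝ} (h1 : (k : ℝ) ≤ y) (h2 : y ≤ k + 1/4) :
    round y = (k : ℤ) := by
  rw [round_eq, Int.floor_eq_iff]
  push_cast
  constructor <;> linarith

/-- for `A = (-1)`, the supremum over bounded intervals `J` of
`(1/|J|)∫_J w(-x) dx · (1/|J|)∫_J w(x)⁻¹ dx` is infinite; in particular `w ∉ A_{-I,2}`. -/
theorem stmt15 :
    ∀ C : ℝ, ∃ s t : ℝ, s < t ∧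
      C < ((t - s)⁻¹ * ∫ x in s..t, w (-x)) * ((t - s)⁻¹ * ∫ x in s..t, (w x)⁻¹) := by
  intro C
  set k : ℕ := ⌈C^2⌉₊ + 1 with hk
  have hk1 : (1 : ℝ) ≤ (k : ℝ) := by exact_mod_cast Nat.one_le_iff_ne_zero.2 (by simp [hk])
  set s : ℝ := -((k : ℝ) + 1/4) with hs
  set t : ℝ := -(k : ℝ) with ht
  have hst : s < t := by rw [hs, ht]; linarith
  refine ⟨s, t, hst, ?_⟩
  have hts : t - s = 1/4 := by rw [hs, ht]; ring
  have huIcc : Set.uIcc s t = Set.Icc s t := Set.uIcc_of_le hst.le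
  -- first integral
  have h1 : (∫ x in s..t, w (-x)) = 1 := by
    have hcong : (∫ x in s..t, w (-x))
        = ∫ x in s..t, (fun y => (y - (k : ℝ)) ^ (-(1:ℝ)/2)) (-x) := by
      apply intervalIntegral.integral_congr
      intro x hx
      rw [huIcc] at hx
      obtain ⟨hx1, hx2⟩ := hx
      have hy1 : (k : ℝ) ≤ -x := by rw [ht] at hx2; linarith
      have hy2 : -x ≤ (k : ℝ) + 1/4 := by rw [hs] at hx1; linarith
      simp only [w]
      rw [if_neg (by push_neg; linarith), round_eq_of_mem hy1 hy2]
      rw [Int.cast_natCast, abs_of_nonneg (by linarith)]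
    rw [hcong, intervalIntegral.integral_comp_neg (fun y => (y - (k : ℝ)) ^ (-(1:ℝ)/2))]
    rw [intervalIntegral.integral_comp_sub_right (fun y => y ^ (-(1:ℝ)/2)) (k : ℝ)]
    have h0 : -(t : ℝ) - k = 0 := by rw [ht]; ring
    have h14 : -(s : ℝ) - k = 1/4 := by rw [hs]; ring
    rw [h0, h14, integral_rpow (Or.inl (by norm_num))]
    have : ((1:ℝ)/4) ^ ((-(1:ℝ)/2) + 1) = 1/2 := by
      norm_num
    rw [this, Real.zero_rpow (by norm_num)]
    norm_num
  -- second integral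
  have h2 : (∫ x in s..t, (w x)⁻¹) = ∫ y in (k:ℝ)..((k:ℝ)+1/4), y ^ ((1:ℝ)/2) := by
    have hcong : (∫ x in s..t, (w x)⁻¹)
        = ∫ x in s..t, (fun y => y ^ ((1:ℝ)/2)) (-x) := by
      apply intervalIntegral.integral_congr
      intro x hx
      rw [huIcc] at hx
      obtain ⟨hx1, hx2⟩ := hx
      have hxneg : x ≤ -(1:ℝ) := by rw [ht] at hx2; linarith
      simp only [w]
      rw [if_pos (by linarith), abs_of_nonpos (by linarith)]
      rw [show (-(1:ℝ)/2) = -((1:ℝ)/2) by ring, Real.rpow_neg (by linarith), inv_inv]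
    rw [hcong, intervalIntegral.integral_comp_neg (fun y => y ^ ((1:ℝ)/2))]
    congr 1 <;> [rw [ht]; rw [hs]] <;> ring
  have h2lb : Real.sqrt k * (1/4) ≤ ∫ x in s..t, (w x)⁻¹ := by
    rw [h2]
    have hmono : (∫ y in (k:ℝ)..((k:ℝ)+1/4), Real.sqrt k)
        ≤ ∫ y in (k:ℝ)..((k:ℝ)+1/4), y ^ ((1:ℝ)/2) := by
      apply intervalIntegral.integral_mono_on (by linarith)
        intervalIntegrable_const
        (intervalIntegral.intervalIntegrable_rpow (Or.inl (by norm_num)))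
      intro y hy
      rw [Real.sqrt_eq_rpow]
      exact Real.rpow_le_rpow (by linarith) hy.1 (by norm_num)
    rw [intervalIntegral.integral_const, smul_eq_mul] at hmono
    calc Real.sqrt k * (1/4) = ((k:ℝ) + 1/4 - k) * Real.sqrt k := by ring
    _ ≤ _ := hmono
  rw [h1, hts]
  have hCk : C < 4 * Real.sqrt k := by
    have h1k : (C^2 : ℝ) < k := by
      have := Nat.le_ceil (C^2)
      push_cast [hk]
      linarith
    have := Real.sqrt_lt_sqrt (sq_nonneg C) h1k
    rw [Real.sqrt_sq_eq_abs] at this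
    have habs : C ≤ |C| := le_abs_self C
    have hs4 : (0:ℝ) ≤ Real.sqrt k := Real.sqrt_nonneg _
    linarith
  have hs4 : (0:ℝ) ≤ Real.sqrt k := Real.sqrt_nonneg _
  calc C < 4 * Real.sqrt k := hCk
  _ ≤ (4⁻¹)⁻¹ * 1 * ((4⁻¹)⁻¹ * ∫ x in s..t, (w x)⁻¹) := by
      norm_num; nlinarith [h2lb]
  _ = ((1/4:ℝ))⁻¹ * 1 * (((1/4:ℝ))⁻¹ * ∫ x in s..t, (w x)⁻¹) := by norm_num
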